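/- Let R be a fusion algebra with dimension function d^R and (M, I^M, c, d^M) a fusion module over R. For each u ∈ I^R, the left action operator Γ_u: ℓ²(I^M) → ℓ²(I^M), given on basis vectors by Γ_u(δ_α) = ∑_β c^β_{u,α} δ_β, extends to a bounded linear operator with ‖Γ_u‖ ≤ d^R(u). -/
import Mathlib


/-- For a fusion module `(M, I^M, c, d^M)` over a fusion algebra with
dimension function `d^R`, each left action operator `Γ_u`, given on the standard basis of
`ℓ²(I^M)` by `Γ_u(δ_α) = ∑_β c^β_{u,α} δ_β`, extends to a bounded operator of norm at
most `d^R(u)`. -/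
theorem stmt1 {IR IM : Type*} [DecidableEq IM]
    (dR : IR → ℝ) (dM : IM → ℝ) (bar : IR → IR)
    (c : IR → IM → IM → ℕ)
    (hfin : ∀ u α, (Function.support fun β => c u α β).Finite)
    (hdR : ∀ u, 1 ≤ dR u) (hbar : ∀ u, dR (bar u) = dR u)
    (hdM : ∀ α, 0 < dM α)
    (hsym : ∀ u α β, c u α β = c (bar u) β α)
    (hdim : ∀ u α, ∑' β, (c u α β : ℝ) * dM β = dR u * dM α)
    (u : IR) :
    ∃ T : lp (fun _ : IM => ℂ) 2 →L[ℂ] lp (fun _ : IM => ℂ) 2,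
      ‖T‖ ≤ dR u ∧ ∀ α β : IM, T (lp.single 2 α 1) β = (c u α β : ℂ) := by
  classical
  have hu0 : (0:ℝ) ≤ dR u := le_trans zero_le_one (hdR u)
  have htwo : ((2:ENNReal)).toReal = 2 := by norm_num
  have hrp : ∀ x : ℝ, x ^ ((2:ENNReal)).toReal = x ^ 2 := fun x => by
    rw [htwo, show (2:ℝ) = ((2:ℕ):ℝ) by norm_num, Real.rpow_natCast]
  -- finite support in the first module variable
  have hKfin : ∀ β : IM, (Function.support fun α => c u α β).Finite := by
    intro β
    refine (hfin (bar u) β).subset ?_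
    intro α hα
    simp only [Function.mem_support] at hα ⊢
    rw [← hsym]; exact hα
  set S : IM → Finset IM := fun β => (hKfin β).toFinset with hS
  have hmemS : ∀ {α β : IM}, α ∈ S β ↔ c u α β ≠ 0 := by
    intro α β; simp [hS, Function.mem_support]
  -- row sums
  have hrow : ∀ β : IM, ∑ α ∈ S β, (c u α β : ℝ) * dM α = dR u * dM β := by
    intro β
    have h1 : ∑' α, (c u α β : ℝ) * dM α = ∑ α ∈ S β, (c u α β : ℝ) * dM α := by
      refine tsum_eq_sum ?_
      intro α hα
      have hz : c u α β = 0 := by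
        by_contra h; exact hα (hmemS.mpr h)
      simp [hz]
    rw [← h1]
    calc ∑' α, (c u α β : ℝ) * dM α
        = ∑' α, (c (bar u) β α : ℝ) * dM α := tsum_congr fun α => by rw [hsym]
      _ = dR (bar u) * dM β := hdim (bar u) β
      _ = dR u * dM β := by rw [hbar]
  -- column sums bounded over finsets
  have hcolsummable : ∀ α : IM, Summable fun β => (c u α β : ℝ) * dM β := by
    intro α
    apply summable_of_ne_finset_zero (s := (hfin u α).toFinset)
    intro β hβ
    have hz : c u α β = 0 := by
      by_contra h
      exact hβ ((hfin u α).mem_toFinset.mpr h)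
    simp [hz]
  have hcol : ∀ (α : IM) (T : Finset IM), ∑ β ∈ T, (c u α β : ℝ) * dM β ≤ dR u * dM α := by
    intro α T
    calc ∑ β ∈ T, (c u α β : ℝ) * dM β
        ≤ ∑' β, (c u α β : ℝ) * dM β :=
          Summable.sum_le_tsum T (fun β _ => mul_nonneg (Nat.cast_nonneg _) (hdM β).le) (hcolsummable α)
      _ = dR u * dM α := hdim u α
  -- the operator on functions
  set Tf : (lp (fun _ : IM => ℂ) 2) → (IM → ℂ) :=
    fun f β => ∑ α ∈ S β, (c u α β : ℂ) * f α with hTf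
  -- pointwise Schur estimate
  have hpt : ∀ (f : lp (fun _ : IM => ℂ) 2) (β : IM),
      ‖Tf f β‖ ^ 2 ≤ (dR u * dM β) * ∑ α ∈ S β, (c u α β : ℝ) * ‖f α‖ ^ 2 / dM α := by
    intro f β
    have h1 : ‖Tf f β‖ ≤ ∑ α ∈ S β, (c u α β : ℝ) * ‖f α‖ := by
      refine (norm_sum_le _ _).trans (le_of_eq ?_)
      refine Finset.sum_congr rfl fun α _ => ?_
      rw [norm_mul]
      norm_num
    have h2 : ‖Tf f β‖ ^ 2 ≤ (∑ α ∈ S β, (c u α β : ℝ) * ‖f α‖) ^ 2 :=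
      pow_le_pow_left₀ (norm_nonneg _) h1 2
    have h3 : (∑ α ∈ S β, (c u α β : ℝ) * ‖f α‖) ^ 2
        ≤ (∑ α ∈ S β, (c u α β : ℝ) * dM α) *
          ∑ α ∈ S β, (c u α β : ℝ) * ‖f α‖ ^ 2 / dM α := by
      have hcs := Finset.sum_mul_sq_le_sq_mul_sq (S β)
        (fun α => Real.sqrt ((c u α β : ℝ) * dM α))
        (fun α => Real.sqrt ((c u α β : ℝ) / dM α) * ‖f α‖)
      have e1 : ∑ α ∈ S β, Real.sqrt ((c u α β : ℝ) * dM α) *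
          (Real.sqrt ((c u α β : ℝ) / dM α) * ‖f α‖)
          = ∑ α ∈ S β, (c u α β : ℝ) * ‖f α‖ := by
        refine Finset.sum_congr rfl fun α _ => ?_
        rw [← mul_assoc, ← Real.sqrt_mul (mul_nonneg (Nat.cast_nonneg _) (hdM α).le)]
        have hdm : dM α ≠ 0 := (hdM α).ne'
        have hq : (c u α β : ℝ) * dM α * ((c u α β : ℝ) / dM α) = ((c u α β : ℝ)) ^ 2 := by
          field_simp
        rw [hq, Real.sqrt_sq (by positivity)]
      have e2 : ∑ α ∈ S β, (Real.sqrt ((c u α β : ℝ) * dM α)) ^ 2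
          = ∑ α ∈ S β, (c u α β : ℝ) * dM α :=
        Finset.sum_congr rfl fun α _ => Real.sq_sqrt (mul_nonneg (Nat.cast_nonneg _) (hdM α).le)
      have e3 : ∑ α ∈ S β, (Real.sqrt ((c u α β : ℝ) / dM α) * ‖f α‖) ^ 2
          = ∑ α ∈ S β, (c u α β : ℝ) * ‖f α‖ ^ 2 / dM α := by
        refine Finset.sum_congr rfl fun α _ => ?_
        rw [mul_pow, Real.sq_sqrt (div_nonneg (Nat.cast_nonneg _) (hdM α).le)]
        ring
      rw [e1, e2, e3] at hcs
      exact hcs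
    rw [hrow β] at h3
    exact h2.trans h3
  -- ℓ² data of f
  have hfsummable : ∀ f : lp (fun _ : IM => ℂ) 2, Summable fun α => ‖f α‖ ^ 2 := by
    intro f
    have := (lp.memℓp f).summable (by norm_num)
    simpa only [hrp] using this
  have hfnorm : ∀ f : lp (fun _ : IM => ℂ) 2, ∑' α, ‖f α‖ ^ 2 = ‖f‖ ^ 2 := by
    intro f
    have := lp.norm_rpow_eq_tsum (p := 2) (by norm_num) f
    simp only [hrp] at this
    exact this.symm
  -- main Schur bound over arbitrary finsets
  have key : ∀ (f : lp (fun _ : IM => ℂ) 2) (T : Finset IM),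
      ∑ β ∈ T, ‖Tf f β‖ ^ 2 ≤ (dR u * ‖f‖) ^ 2 := by
    intro f T
    set G : IM → IM → ℝ :=
      fun β α => (dR u * dM β) * ((c u α β : ℝ) * ‖f α‖ ^ 2 / dM α) with hG
    have hGzero : ∀ β α, α ∉ S β → G β α = 0 := by
      intro β α hα
      have hz : c u α β = 0 := by
        by_contra h; exact hα (hmemS.mpr h)
      simp [hG, hz]
    have hGnn : ∀ β α, 0 ≤ G β α := by
      intro β α
      have h1 := (hdM β).le
      have h2 := (hdM α).le
      positivity
    have hGsummable : ∀ β, Summable (G β) := fun β =>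
      summable_of_ne_finset_zero (s := S β) (hGzero β)
    have step1 : ∑ β ∈ T, ‖Tf f β‖ ^ 2
        ≤ ∑ β ∈ T, (dR u * dM β) * ∑ α ∈ S β, (c u α β : ℝ) * ‖f α‖ ^ 2 / dM α :=
      Finset.sum_le_sum fun β _ => hpt f β
    have step2 : ∀ β, (dR u * dM β) * (∑ α ∈ S β, (c u α β : ℝ) * ‖f α‖ ^ 2 / dM α)
        = ∑' α, G β α := by
      intro β
      rw [Finset.mul_sum]
      exact (tsum_eq_sum fun α hα => hGzero β α hα).symm
    have step3 : ∑ β ∈ T, ∑' α, G β α = ∑' α, ∑ β ∈ T, G β α :=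
      (Summable.tsum_finsetSum fun β _ => hGsummable β).symm
    have hGb : ∀ α, ∑ β ∈ T, G β α ≤ (dR u) ^ 2 * ‖f α‖ ^ 2 := by
      intro α
      have hrw : ∑ β ∈ T, G β α
          = (dR u * (‖f α‖ ^ 2 / dM α)) * ∑ β ∈ T, (c u α β : ℝ) * dM β := by
        rw [Finset.mul_sum]
        refine Finset.sum_congr rfl fun β _ => ?_
        simp only [hG]; ring
      rw [hrw]
      have h0 : 0 ≤ dR u * (‖f α‖ ^ 2 / dM α) := by
        have := (hdM α).le; positivity
      calc (dR u * (‖f α‖ ^ 2 / dM α)) * ∑ β ∈ T, (c u α β : ℝ) * dM β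
          ≤ (dR u * (‖f α‖ ^ 2 / dM α)) * (dR u * dM α) :=
            mul_le_mul_of_nonneg_left (hcol α T) h0
        _ = (dR u) ^ 2 * ‖f α‖ ^ 2 := by
            field_simp [(hdM α).ne']
    have hsumR : Summable fun α => (dR u) ^ 2 * ‖f α‖ ^ 2 := (hfsummable f).mul_left _
    have hsumL : Summable fun α => ∑ β ∈ T, G β α :=
      Summable.of_nonneg_of_le (fun α => Finset.sum_nonneg fun β _ => hGnn β α) hGb hsumR
    have step4 : ∑' α, ∑ β ∈ T, G β α ≤ ∑' α, (dR u) ^ 2 * ‖f α‖ ^ 2 :=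
      Summable.tsum_le_tsum hGb hsumL hsumR
    calc ∑ β ∈ T, ‖Tf f β‖ ^ 2
        ≤ ∑ β ∈ T, (dR u * dM β) * ∑ α ∈ S β, (c u α β : ℝ) * ‖f α‖ ^ 2 / dM α := step1
      _ = ∑ β ∈ T, ∑' α, G β α := Finset.sum_congr rfl fun β _ => step2 β
      _ = ∑' α, ∑ β ∈ T, G β α := step3
      _ ≤ ∑' α, (dR u) ^ 2 * ‖f α‖ ^ 2 := step4
      _ = (dR u) ^ 2 * ∑' α, ‖f α‖ ^ 2 := tsum_mul_left
      _ = (dR u * ‖f‖) ^ 2 := by rw [hfnorm f]; ring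
  -- membership in ℓ²
  have hmem : ∀ f : lp (fun _ : IM => ℂ) 2, Memℓp (Tf f) 2 := by
    intro f
    apply memℓp_gen
    have hs : Summable fun β => ‖Tf f β‖ ^ 2 :=
      summable_of_sum_le (fun β => sq_nonneg _) (key f)
    simpa only [hrp] using hs
  -- the linear map
  set L : lp (fun _ : IM => ℂ) 2 →ₗ[ℂ] lp (fun _ : IM => ℂ) 2 :=
    { toFun := fun f => ⟨Tf f, hmem f⟩
      map_add' := by
        intro f g
        apply Subtype.ext
        funext β
        have hcoe : ∀ α, ((f + g : lp (fun _ : IM => ℂ) 2) : ∀ _ : IM, ℂ) α = f α + g α :=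
          fun α => by rw [lp.coeFn_add]; rfl
        show Tf (f + g) β = Tf f β + Tf g β
        simp only [hTf]
        rw [Finset.sum_congr rfl fun α _ => by rw [hcoe α, mul_add]]
        exact Finset.sum_add_distrib
      map_smul' := by
        intro a f
        apply Subtype.ext
        funext β
        have hcoe : ∀ α, ((a • f : lp (fun _ : IM => ℂ) 2) : ∀ _ : IM, ℂ) α = a * f α :=
          fun α => by rw [lp.coeFn_smul]; rfl
        show Tf (a • f) β = a * Tf f β
        simp only [hTf]
        rw [Finset.mul_sum]
        refine Finset.sum_congr rfl fun α _ => ?_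
        rw [hcoe α]; ring } with hL
  have hLnorm : ∀ f, ‖L f‖ ≤ dR u * ‖f‖ := by
    intro f
    refine lp.norm_le_of_forall_sum_le (by norm_num) (mul_nonneg hu0 (norm_nonneg f)) ?_
    intro s
    have : ∑ β ∈ s, ‖(L f : ∀ _ : IM, ℂ) β‖ ^ ((2:ENNReal)).toReal
        = ∑ β ∈ s, ‖Tf f β‖ ^ 2 :=
      Finset.sum_congr rfl fun β _ => by rw [hrp]; rfl
    rw [this, hrp]
    exact key f s
  refine ⟨L.mkContinuous (dR u) hLnorm, L.mkContinuous_norm_le hu0 hLnorm, ?_⟩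
  intro α β
  have hsingle : ∀ γ : IM, (lp.single (E := fun _ : IM => ℂ) 2 α 1) γ = if γ = α then 1 else 0 := by
    intro γ
    by_cases h : γ = α
    · subst h; simp [lp.single_apply_self]
    · simp [lp.single_apply_ne _ _ _ h, h]
  show Tf (lp.single 2 α 1) β = (c u α β : ℂ)
  simp only [hTf]
  rw [Finset.sum_congr rfl fun γ _ => by rw [hsingle γ]]
  simp only [mul_ite, mul_one, mul_zero]
  rw [Finset.sum_ite_eq' (S β) α fun γ => ((c u γ β : ℂ))]
  by_cases h : α ∈ S β
  · rw [if_pos h]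
  · rw [if_neg h]
    have hz : c u α β = 0 := by
      by_contra hc; exact h (hmemS.mpr hc)
    simp [hz]
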